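/- Let D be a solid digraph and let T be a normal spanning arborescence of D. Then every ray of T (an injective map r : ℕ → V with T (r n) (r (n+1)) for all n) is a solid ray of D. -/

import Mathlib

/-- Mutual reachability in `D − X`: `u` and `v` lie in the same strong component
of the restriction of `E` to the complement of `X`. -/
def SameComp {V : Type*} (E : V → V → Prop) (X : Set V) (u v : V) : Prop :=
  Relation.ReflTransGen (fun a b => a ∉ X ∧ b ∉ X ∧ E a b) u v ∧
  Relation.ReflTransGen (fun a b => a ∉ X ∧ b ∉ X ∧ E a b) v u

/-- A digraph is solid if deleting any finite vertex set leaves only finitely many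
strong components. -/
def IsSolid {V : Type*} (E : V → V → Prop) : Prop :=
  ∀ X : Set V, X.Finite →
    {C : Set V | ∃ v, v ∉ X ∧ C = {u | u ∉ X ∧ SameComp E X u v}}.Finite

/-- A ray in a digraph. -/
def IsRay {V : Type*} (E : V → V → Prop) (r : ℕ → V) : Prop :=
  Function.Injective r ∧ ∀ n : ℕ, E (r n) (r (n + 1))

/-- A solid ray: it has a tail in a single strong component of `D − X`
for every finite `X`. -/
def IsSolidRay {V : Type*} (E : V → V → Prop) (r : ℕ → V) : Prop :=
  IsRay E r ∧ ∀ X : Set V, X.Finite →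
    ∃ N : ℕ, (∀ n : ℕ, N ≤ n → r n ∉ X) ∧
      (∀ m n : ℕ, N ≤ m → N ≤ n → SameComp E X (r m) (r n))

/-- Two rays are equivalent if for every finite `X` they have tails in
the same strong component of `D − X`. -/
def RayEquiv {V : Type*} (E : V → V → Prop) (r r' : ℕ → V) : Prop :=
  ∀ X : Set V, X.Finite →
    ∃ N M : ℕ, (∀ n : ℕ, N ≤ n → r n ∉ X) ∧ (∀ m : ℕ, M ≤ m → r' m ∉ X) ∧
      (∀ n m : ℕ, N ≤ n → M ≤ m → SameComp E X (r n) (r' m))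

/-- `T` is a spanning arborescence of the digraph `E` rooted at `root`. -/
def IsSpanningArborescence {V : Type*} (E T : V → V → Prop) (root : V) : Prop :=
  (∀ u v : V, T u v → E u v) ∧
  (∀ u : V, ¬ T u root) ∧
  (∀ v : V, v ≠ root → ∃! u : V, T u v) ∧
  (∀ v : V, Relation.ReflTransGen T root v)

/-- The normal assistant of `T` in `E`: the tree edges of `T` together with an
edge `(v, w)` for every two tree-incomparable vertices `v, w` such that `E` has
an edge from the up-closure of `v` to the up-closure of `w`. -/
def NormalAssistant {V : Type*} (E T : V → V → Prop) : V → V → Prop := fun v w =>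
  T v w ∨
    (¬ Relation.ReflTransGen T v w ∧ ¬ Relation.ReflTransGen T w v ∧
      ∃ v' w' : V, Relation.ReflTransGen T v v' ∧ Relation.ReflTransGen T w w' ∧ E v' w')

/-- `T` is normal in `E` if its normal assistant is acyclic. -/
def IsNormal {V : Type*} (E T : V → V → Prop) : Prop :=
  Irreflexive (Relation.TransGen (NormalAssistant E T))

/-!
Every ray of a solid digraph is solid, and the rays of `T` are rays of `D`. Given a finite
`X`, a tail of the ray avoids `X`, so by pigeonhole it meets one strong component `C` of `D − X`
infinitely often. Every vertex of the tail after its first visit to `C` reaches `C` along the ray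
(at a later visit) and is reached from `C` (from the first visit), so this whole tail lies in `C`.
-/

open Filter

section

variable {V : Type*} {E : V → V → Prop} {X : Set V}

namespace SameComp

theorem refl (u : V) : SameComp E X u u :=
  ⟨.refl, .refl⟩

theorem symm {u v : V} (h : SameComp E X u v) : SameComp E X v u :=
  ⟨h.2, h.1⟩

theorem trans {u v w : V} (huv : SameComp E X u v) (hvw : SameComp E X v w) :
    SameComp E X u w :=
  ⟨huv.1.trans hvw.1, hvw.2.trans huv.2⟩

end SameComp

theorem IsSolid.exists_frequently_sameComp {ι : Type*} {l : Filter ι} [l.NeBot]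
    (hE : IsSolid E) (hX : X.Finite) {f : ι → V} (hf : ∀ᶠ i in l, f i ∉ X) :
    ∃ v, ∃ᶠ i in l, SameComp E X (f i) v := by
  have hmem : ∃ᶠ i in l, ∃ C ∈ {C : Set V | ∃ v, v ∉ X ∧ C = {u | u ∉ X ∧ SameComp E X u v}},
      f i ∈ C :=
    (hf.mono fun i hi => ⟨_, ⟨f i, hi, rfl⟩, hi, SameComp.refl _⟩).frequently
  obtain ⟨C, ⟨v, -, rfl⟩, hC⟩ := (hE X hX).frequently_exists.1 hmem
  exact ⟨v, hC.mono fun _ hi => hi.2⟩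

theorem IsRay.eventually_notMem {r : ℕ → V} (hr : IsRay E r) (hX : X.Finite) :
    ∀ᶠ n in atTop, r n ∉ X := by
  rw [← Nat.cofinite_eq_atTop]
  exact hr.1.tendsto_cofinite.eventually hX.eventually_cofinite_notMem

theorem IsRay.reflTransGen_of_le {r : ℕ → V} (hr : IsRay E r) {N m n : ℕ}
    (hX : ∀ k ≥ N, r k ∉ X) (hNm : N ≤ m) (hmn : m ≤ n) :
    Relation.ReflTransGen (fun a b => a ∉ X ∧ b ∉ X ∧ E a b) (r m) (r n) :=
  (reflTransGen_of_succ_of_le (fun i j => r i ∉ X ∧ r j ∉ X ∧ E (r i) (r j))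
    (fun k hk => ⟨hX k (hNm.trans hk.1), hX (k + 1) ((hNm.trans hk.1).trans k.le_succ), hr.2 k⟩) hmn).lift r
    fun _ _ h => h

theorem IsSolid.isSolidRay {r : ℕ → V} (hE : IsSolid E) (hr : IsRay E r) : IsSolidRay E r := by
  refine ⟨hr, fun X hX => ?_⟩
  have hout := hr.eventually_notMem hX
  obtain ⟨v, hv⟩ := hE.exists_frequently_sameComp hX hout
  obtain ⟨N, hN⟩ := eventually_atTop.1 hout
  obtain ⟨M, hNM, hMv⟩ := hv.forall_exists_of_atTop N
  have htail : ∀ n ≥ M, SameComp E X (r n) (r M) := by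
    intro n hn
    obtain ⟨m, hnm, hmv⟩ := hv.forall_exists_of_atTop n
    refine ⟨?_, hr.reflTransGen_of_le hN hNM hn⟩
    exact (hr.reflTransGen_of_le hN (hNM.trans hn) hnm).trans (hmv.trans hMv.symm).1
  exact ⟨M, fun n hn => hN n (hNM.trans hn),
    fun m n hm hn => (htail m hm).trans (htail n hn).symm⟩

end

theorem stmt_17_general {V : Type*} (E T : V → V → Prop)
    (h_solid : IsSolid E)
    (root : V)
    (h_arb : IsSpanningArborescence E T root)
    (r : ℕ → V) (h_inj : Function.Injective r)
    (h_ray : ∀ n : ℕ, T (r n) (r (n + 1))) :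
    IsSolidRay E r :=
  h_solid.isSolidRay ⟨h_inj, fun n => h_arb.1 _ _ (h_ray n)⟩

theorem stmt_17 {V : Type*} (E T : V → V → Prop)
    (h_irr : ∀ v : V, ¬ E v v)
    (h_solid : IsSolid E)
    (root : V)
    (h_arb : IsSpanningArborescence E T root)
    (h_norm : IsNormal E T)
    (r : ℕ → V) (h_inj : Function.Injective r)
    (h_ray : ∀ n : ℕ, T (r n) (r (n + 1))) :
    IsSolidRay E r :=
  stmt_17_general E T h_solid root h_arb r h_inj h_ray
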